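/- Let z₁, …, z_n ∈ ℝ^d, let θ, θ* ∈ ℝ^d, let λ > 0, and let M ≥ 0 satisfy |z_sᵀ(θ − θ*)| ≤ M for all s ∈ [n]. Then the positive semidefinite ordering λ·I_d + Σ_{s=1}^n σ̇(z_sᵀθ)·z_s z_sᵀ ≼ 1.01·(2 + M)² · ( λ·I_d + Σ_{s=1}^n [∫₀¹ (1−v)·σ̇(z_sᵀθ* + v·z_sᵀ(θ − θ*)) dv]·z_s z_sᵀ ) holds. -/

import Mathlib

open Matrix

/-- The sigmoid function `σ(w) = 1 / (1 + exp (-w))`. -/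
noncomputable def sigm (w : ℝ) : ℝ := 1 / (1 + Real.exp (-w))

/-- The derivative of the sigmoid: `σ̇(w) = σ(w) (1 - σ(w))`. -/
noncomputable def sigmDeriv (w : ℝ) : ℝ := sigm w * (1 - sigm w)

lemma sigmDeriv_eq (w : ℝ) : sigmDeriv w = Real.exp (-w) / (1 + Real.exp (-w))^2 := by
  have h : (0:ℝ) < 1 + Real.exp (-w) := by positivity
  unfold sigmDeriv sigm
  field_simp
  ring

lemma sigmDeriv_nonneg (w : ℝ) : 0 ≤ sigmDeriv w := by
  rw [sigmDeriv_eq]; positivity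

lemma sigmDeriv_cont : Continuous sigmDeriv := by
  have : ∀ w, sigmDeriv w = Real.exp (-w) / (1 + Real.exp (-w))^2 := sigmDeriv_eq
  rw [show sigmDeriv = fun w => Real.exp (-w) / (1 + Real.exp (-w))^2 from funext this]
  fun_prop (disch := intros; positivity)

lemma sigmDeriv_exp_bound (x t : ℝ) :
    sigmDeriv x * Real.exp (-|t|) ≤ sigmDeriv (x + t) := by
  rw [sigmDeriv_eq, sigmDeriv_eq]
  have hA : (0:ℝ) < Real.exp (-x) := Real.exp_pos _
  have hB : (0:ℝ) < Real.exp (-t) := Real.exp_pos _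
  have hAB : Real.exp (-(x+t)) = Real.exp (-x) * Real.exp (-t) := by
    rw [← Real.exp_add]; ring_nf
  set A := Real.exp (-x) with hAdef
  set B := Real.exp (-t) with hBdef
  rw [hAB]
  rcases le_total 0 t with ht | ht
  · have h1 : |t| = t := abs_of_nonneg ht
    have h2 : Real.exp (-|t|) = B := by rw [h1]
    rw [h2]
    have hB1 : B ≤ 1 := by rw [hBdef]; exact Real.exp_le_one_iff.mpr (by linarith)
    rw [div_mul_eq_mul_div, div_le_div_iff₀ (by positivity) (by positivity)]
    have h3 : A * B ≤ A := by nlinarith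
    have h4 : (1 + A*B)^2 ≤ (1 + A)^2 := by nlinarith [mul_pos hA hB, sq_nonneg (A - A*B)]
    nlinarith [mul_le_mul_of_nonneg_left h4 (mul_pos hA hB).le]
  · have h1 : |t| = -t := abs_of_nonpos ht
    set e := Real.exp (-|t|) with hedef
    have he : 0 < e := Real.exp_pos _
    have h2 : e * B = 1 := by rw [hedef, hBdef, h1, ← Real.exp_add]; simp
    have hB1 : 1 ≤ B := by rw [hBdef]; exact Real.one_le_exp_iff.mpr (by linarith)
    rw [div_mul_eq_mul_div, div_le_div_iff₀ (by positivity) (by positivity)]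
    have key : (1 + A*B) ≤ B*(1+A) := by nlinarith
    have key2 : (1 + A*B)^2 ≤ (B*(1+A))^2 := by
      have := mul_self_le_mul_self (by positivity : (0:ℝ) ≤ 1 + A*B) key
      nlinarith [this]
    have h5 : A * e * (1 + A*B)^2 ≤ A * e * (B*(1+A))^2 := by
      apply mul_le_mul_of_nonneg_left key2 (by positivity)
    calc A * e * (1 + A*B)^2 ≤ A * e * (B*(1+A))^2 := h5
      _ = A * B * (1+A)^2 * (e * B) := by ring
      _ = A * B * (1+A)^2 := by rw [h2, mul_one]

lemma integral_exp_eq (m : ℝ) (hm : 0 < m) :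
    ∫ v in (0:ℝ)..1, (1-v) * Real.exp (-(1-v)*m)
      = (1 - (1+m)*Real.exp (-m))/m^2 := by
  have hF : ∀ v ∈ Set.uIcc (0:ℝ) 1, HasDerivAt
      (fun v => Real.exp (-(1-v)*m) * ((1-v)/m + 1/m^2))
      ((1-v) * Real.exp (-(1-v)*m)) v := by
    intro v _
    have h1 : HasDerivAt (fun v : ℝ => -(1-v)*m) m v := by
      have : HasDerivAt (fun v : ℝ => -(1-v)*m) ((-(0-1))*m) v := by
        exact (((hasDerivAt_const v (1:ℝ)).sub (hasDerivAt_id v)).neg.mul_const m)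
      simpa using this
    have h2 : HasDerivAt (fun v : ℝ => Real.exp (-(1-v)*m)) (Real.exp (-(1-v)*m) * m) v :=
      (Real.hasDerivAt_exp _).comp v h1
    have h3 : HasDerivAt (fun v : ℝ => (1-v)/m + 1/m^2) (-1/m) v := by
      have : HasDerivAt (fun v : ℝ => (1-v)/m + 1/m^2) ((0-1)/m + 0) v :=
        (((hasDerivAt_const v (1:ℝ)).sub (hasDerivAt_id v)).div_const m).add
          (hasDerivAt_const v _)
      simpa using this
    have : HasDerivAt (fun v : ℝ => Real.exp (-(1-v)*m) * ((1-v)/m + 1/m^2)) _ v := h2.mul h3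
    convert this using 1
    field_simp [hm.ne']
    ring
  have hInt : IntervalIntegrable (fun v => (1-v) * Real.exp (-(1-v)*m))
      MeasureTheory.volume 0 1 := by
    apply Continuous.intervalIntegrable
    fun_prop
  rw [intervalIntegral.integral_eq_sub_of_hasDerivAt hF hInt]
  field_simp
  simp only [sub_self, zero_mul, neg_zero, Real.exp_zero, sub_zero, mul_one, zero_add, one_mul]; ring

lemma numeric_bound (m : ℝ) (hm : 0 < m) :
    1 ≤ 1.01*(2+m)^2 * ((1 - (1+m)*Real.exp (-m))/m^2) := by
  have hE : 1 + m + m^2/2 ≤ Real.exp m := Real.quadratic_le_exp_of_nonneg hm.le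
  have hEpos : 0 < Real.exp m := Real.exp_pos m
  rw [Real.exp_neg]
  have key : 0 ≤ (Real.exp m - (1+m+m^2/2)) * (1.01*(2+m)^2 - m^2) := by
    apply mul_nonneg (by linarith)
    nlinarith
  have h1 : (1 - (1+m)*(Real.exp m)⁻¹) = (Real.exp m - (1+m))/Real.exp m := by
    field_simp
  rw [h1, div_div, ← mul_div_assoc, le_div_iff₀ (by positivity)]
  nlinarith [key, hEpos, sq_nonneg m]

lemma sigmDeriv_integrand_cont (c a : ℝ) :
    Continuous (fun v : ℝ => (1-v) * sigmDeriv (c + v*a)) := by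
  exact (continuous_const.sub continuous_id).mul
    (sigmDeriv_cont.comp (continuous_const.add (continuous_id.mul continuous_const)))

lemma key_integral (c a M : ℝ) (hM : 0 ≤ M) (h : |a| ≤ M) :
    sigmDeriv (c + a) ≤ (1.01 * (2+M)^2) * ∫ v in (0:ℝ)..1, (1-v) * sigmDeriv (c + v*a) := by
  have hMfac : (2:ℝ) ≤ 1.01 * (2+M)^2 := by nlinarith
  rcases eq_or_ne a 0 with rfl | ha
  · simp only [mul_zero, add_zero]
    have : ∫ v in (0:ℝ)..1, (1-v) * sigmDeriv c = (1/2) * sigmDeriv c := by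
      rw [intervalIntegral.integral_mul_const]
      have h0 : (∫ v in (0:ℝ)..1, (1-v)) = 1/2 := by
        rw [intervalIntegral.integral_sub (Continuous.intervalIntegrable (by fun_prop) _ _)
          (Continuous.intervalIntegrable (by fun_prop) _ _)]
        simp [integral_id]
        norm_num
      rw [h0]
    rw [this]
    have := sigmDeriv_nonneg c
    nlinarith
  · set m := |a| with hm
    have hmpos : 0 < m := abs_pos.mpr ha
    -- pointwise bound
    have hpt : ∀ v ∈ Set.Icc (0:ℝ) 1,
        sigmDeriv (c+a) * ((1-v) * Real.exp (-(1-v)*m)) ≤ (1-v) * sigmDeriv (c + v*a) := by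
      intro v hv
      obtain ⟨hv0, hv1⟩ := hv
      have h1 : c + v*a = (c+a) + (v-1)*a := by ring
      have h2 : |(v-1)*a| = (1-v)*m := by
        rw [abs_mul, abs_sub_comm, abs_of_nonneg (by linarith : (0:ℝ) ≤ 1 - v)]
      have := sigmDeriv_exp_bound (c+a) ((v-1)*a)
      rw [h2] at this
      rw [h1]
      calc sigmDeriv (c+a) * ((1-v) * Real.exp (-(1-v)*m))
          = (1-v) * (sigmDeriv (c+a) * Real.exp (-((1-v)*m))) := by ring_nf
        _ ≤ (1-v) * sigmDeriv ((c+a) + (v-1)*a) :=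
            mul_le_mul_of_nonneg_left this (by linarith)
    have hint1 : IntervalIntegrable
        (fun v => sigmDeriv (c+a) * ((1-v) * Real.exp (-(1-v)*m)))
        MeasureTheory.volume 0 1 := by
      apply Continuous.intervalIntegrable; fun_prop
    have hint2 : IntervalIntegrable (fun v => (1-v) * sigmDeriv (c + v*a))
        MeasureTheory.volume 0 1 := (sigmDeriv_integrand_cont c a).intervalIntegrable 0 1
    have hmono := intervalIntegral.integral_mono_on (by norm_num : (0:ℝ) ≤ 1) hint1 hint2 hpt
    rw [intervalIntegral.integral_const_mul, integral_exp_eq m hmpos] at hmono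
    -- numeric facts
    have hnum := numeric_bound m hmpos
    have hg : 0 ≤ (1 - (1+m)*Real.exp (-m))/m^2 := by
      have : 1 + m ≤ Real.exp m := by
        have := Real.add_one_le_exp m; linarith
      rw [Real.exp_neg]
      have h2 : (1+m)*(Real.exp m)⁻¹ ≤ 1 := by
        rw [← le_div_iff₀ (by positivity), one_div, inv_inv]; exact this
      apply div_nonneg (by linarith) (by positivity)
    have hnum2 : 1 ≤ 1.01*(2+M)^2 * ((1 - (1+m)*Real.exp (-m))/m^2) := by
      calc (1:ℝ) ≤ 1.01*(2+m)^2 * ((1 - (1+m)*Real.exp (-m))/m^2) := hnum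
        _ ≤ 1.01*(2+M)^2 * ((1 - (1+m)*Real.exp (-m))/m^2) := by
            apply mul_le_mul_of_nonneg_right _ hg
            nlinarith [hmpos, h]
    have hs := sigmDeriv_nonneg (c+a)
    calc sigmDeriv (c+a) = sigmDeriv (c+a) * 1 := (mul_one _).symm
      _ ≤ sigmDeriv (c+a) * (1.01*(2+M)^2 * ((1 - (1+m)*Real.exp (-m))/m^2)) :=
          mul_le_mul_of_nonneg_left hnum2 hs
      _ = 1.01*(2+M)^2 * (sigmDeriv (c+a) * ((1 - (1+m)*Real.exp (-m))/m^2)) := by ring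
      _ ≤ 1.01*(2+M)^2 * ∫ v in (0:ℝ)..1, (1-v) * sigmDeriv (c + v*a) := by
          apply mul_le_mul_of_nonneg_left hmono (by positivity)

lemma vecMulVec_mulVec' {d : ℕ} (u v x : Fin d → ℝ) :
    vecMulVec u v *ᵥ x = (v ⬝ᵥ x) • u := by
  ext i
  simp only [Matrix.mulVec, Matrix.vecMulVec_apply, dotProduct, Pi.smul_apply, smul_eq_mul,
    Finset.sum_mul]
  exact Finset.sum_congr rfl fun j _ => by ring

lemma sum_mulVec' {d n : ℕ} (A : Fin n → Matrix (Fin d) (Fin d) ℝ) (x : Fin d → ℝ) :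
    (∑ s, A s) *ᵥ x = ∑ s, A s *ᵥ x := by
  ext i
  simp only [Matrix.mulVec, dotProduct, Matrix.sum_apply, Finset.sum_apply, Finset.sum_mul]
  exact Finset.sum_comm


lemma dotProduct_sum' {d n : ℕ} (x : Fin d → ℝ) (v : Fin n → Fin d → ℝ) :
    x ⬝ᵥ (∑ s, v s) = ∑ s, x ⬝ᵥ v s := by
  simp only [dotProduct, Finset.sum_apply, Finset.mul_sum]
  exact Finset.sum_comm


lemma psd_comb {d n : ℕ} (a : ℝ) (ha : 0 ≤ a) (w : Fin n → ℝ) (hw : ∀ s, 0 ≤ w s)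
    (z : Fin n → Fin d → ℝ) :
    (a • (1 : Matrix (Fin d) (Fin d) ℝ) + ∑ s, w s • vecMulVec (z s) (z s)).PosSemidef := by
  refine posSemidef_iff_dotProduct_mulVec.mpr ⟨?_, ?_⟩
  · show _ = _
    ext i j
    simp only [Matrix.conjTranspose_apply, Matrix.add_apply, Matrix.smul_apply,
      Matrix.sum_apply, Matrix.one_apply, Matrix.vecMulVec_apply, smul_eq_mul, star_trivial]
    congr 1
    · simp [eq_comm]
    · exact Finset.sum_congr rfl fun s _ => by ring
  · intro x
    have hx : star x = x := by simp
    simp only [hx, Matrix.add_mulVec, Matrix.smul_mulVec, Matrix.one_mulVec,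
      dotProduct_add, dotProduct_smul, smul_eq_mul, sum_mulVec', dotProduct_sum',
      vecMulVec_mulVec']
    have h1 : 0 ≤ x ⬝ᵥ x := by
      simp only [dotProduct]
      exact Finset.sum_nonneg fun i _ => mul_self_nonneg _
    apply add_nonneg (mul_nonneg ha h1)
    apply Finset.sum_nonneg
    intro s _
    rw [dotProduct_comm x (z s)]
    exact mul_nonneg (hw s) (mul_self_nonneg _)

/-- If `|z_sᵀ(θ - θ*)| ≤ M` for all `s`, then the regularized Hessian of the logistic
log-loss at `θ` is dominated (in the PSD order) by `1.01 (2 + M)²` times the integrated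
Hessian along the segment from `θ*` to `θ`. -/
theorem stmt13 (d n : ℕ) (z : Fin n → Fin d → ℝ) (θ θstar : Fin d → ℝ)
    (lam : ℝ) (hlam : 0 < lam) (M : ℝ) (hM : 0 ≤ M)
    (hbound : ∀ s, |z s ⬝ᵥ (θ - θstar)| ≤ M) :
    ((1.01 * (2 + M) ^ 2) •
        (lam • (1 : Matrix (Fin d) (Fin d) ℝ)
          + ∑ s, (∫ v in (0:ℝ)..1,
              (1 - v) * sigmDeriv (z s ⬝ᵥ θstar + v * (z s ⬝ᵥ (θ - θstar)))) •
            vecMulVec (z s) (z s))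
      - (lam • (1 : Matrix (Fin d) (Fin d) ℝ)
          + ∑ s, sigmDeriv (z s ⬝ᵥ θ) • vecMulVec (z s) (z s))).PosSemidef := by
  set k : ℝ := 1.01 * (2 + M) ^ 2 with hk
  have hk1 : (1:ℝ) ≤ k := by rw [hk]; nlinarith
  set ds : Fin n → ℝ := fun s => ∫ v in (0:ℝ)..1,
      (1 - v) * sigmDeriv (z s ⬝ᵥ θstar + v * (z s ⬝ᵥ (θ - θstar))) with hds
  set cs : Fin n → ℝ := fun s => sigmDeriv (z s ⬝ᵥ θ) with hcs
  set P : Fin n → Matrix (Fin d) (Fin d) ℝ := fun s => vecMulVec (z s) (z s) with hP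
  have hre : (k • (lam • (1 : Matrix (Fin d) (Fin d) ℝ) + ∑ s, ds s • P s)
      - (lam • (1 : Matrix (Fin d) (Fin d) ℝ) + ∑ s, cs s • P s))
      = ((k - 1) * lam) • (1 : Matrix (Fin d) (Fin d) ℝ)
        + ∑ s, (k * ds s - cs s) • P s := by
    have e1 : ((k - 1) * lam) • (1 : Matrix (Fin d) (Fin d) ℝ)
        = (k * lam) • (1 : Matrix (Fin d) (Fin d) ℝ) - lam • 1 := by
      rw [← sub_smul]; congr 1; ring
    have e2 : (∑ s, (k * ds s - cs s) • P s)
        = (∑ s, (k * ds s) • P s) - ∑ s, cs s • P s := by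
      rw [← Finset.sum_sub_distrib]
      exact Finset.sum_congr rfl fun s _ => sub_smul _ _ _
    rw [e1, e2]
    simp only [smul_add, Finset.smul_sum, smul_smul]
    abel
  rw [hre]
  apply psd_comb
  · exact mul_nonneg (by linarith) hlam.le
  · intro s
    have hz : z s ⬝ᵥ θ = z s ⬝ᵥ θstar + z s ⬝ᵥ (θ - θstar) := by
      rw [dotProduct_sub]; ring
    have := key_integral (z s ⬝ᵥ θstar) (z s ⬝ᵥ (θ - θstar)) M hM (hbound s)
    rw [← hz] at this
    simp only [hcs, hds, hk]
    linarith [this]
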